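/- Spectral representation of the connecting form of the finite system: let N ≥ 1 and (b_1,…,b_N) ∈ ℝ^N, and assume (λ_k)_{k=1}^N are eigenvalues of H_N with eigenvectors (φ^k)_{k=1}^N satisfying H_N φ^k = λ_k φ^k and φ^k_1 = 1, such that (φ^1,…,φ^N) is an orthogonal basis of ℝ^N, and set ρ_k := ⟨φ^k, φ^k⟩. Then for every T ≥ 1 and all controls f, g : ℕ → ℝ with f_t = g_t = 0 for t ≥ T: Σ_{n=1}^N v^f_{n,T} v^g_{n,T} = Σ_{k=1}^N (1/ρ_k) (Σ_{l=0}^{T−1} T_{T−l}(λ_k) f_l) (Σ_{m=0}^{T−1} T_{T−m}(λ_k) g_m). -/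

import Mathlib

/-!
Extend the eigenvector `φ^k` by zero to the Dirichlet sites `0` and `N + 1`. Summation by parts
(the discrete Green formula) against the equation of `v^f`, together with the eigenvalue equation,
shows that the coefficient `W_t = ⟨φ^k, v^f_t⟩` obeys `W_{t+1} = λ_k W_t - W_{t-1} + f_t` with
`W_0 = 0`; the only boundary term left is `φ^k_1 f_t = f_t`. By Duhamel's principle
`W_T = ∑_l T_{T-l}(λ_k) f_l`, and the theorem is Parseval's identity in the orthogonal basis
`(φ^k)`.
-/

/-- `solFin N b f t n` is the solution `v^f_{n,t}` of the finite discrete Schrödinger system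
with Dirichlet condition at `n = N+1`:
`v_{n,t+1} + v_{n,t-1} - v_{n+1,t} - v_{n-1,t} + b_n v_{n,t} = 0` for `1 ≤ n ≤ N`, `t ≥ 0`,
`v_{n,-1} = v_{n,0} = 0`, `v_{0,t} = f_t`, `v_{N+1,t} = 0`
(the first argument after `b f` is the time `t`, the last the space variable `n`). -/
noncomputable def solFin (N : ℕ) (b f : ℕ → ℝ) : ℕ → ℕ → ℝ
  | 0, n => if n = 0 then f 0 else 0
  | 1, n => if n = 0 then f 1 else if n = N + 1 then 0 else
      solFin N b f 0 (n + 1) + solFin N b f 0 (n - 1) - b n * solFin N b f 0 n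
  | (t + 2), n => if n = 0 then f (t + 2) else if n = N + 1 then 0 else
      solFin N b f (t + 1) (n + 1) + solFin N b f (t + 1) (n - 1) - b n * solFin N b f (t + 1) n
        - solFin N b f t n

/-- `cheb lam t` is the polynomial sequence `T_t(λ)` with `T_0 = 0`, `T_1 = 1`,
`T_{t+1}(λ) = λ T_t(λ) - T_{t-1}(λ)` (so `T_t(2x) = U_{t-1}(x)`, Chebyshev of the 2nd kind). -/
noncomputable def cheb (lam : ℝ) : ℕ → ℝ
  | 0 => 0
  | 1 => 1
  | (t + 2) => lam * cheb lam (t + 1) - cheb lam t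

/-- The `N × N` symmetric Jacobi matrix `H_N` with diagonal `-b_i` and off-diagonal `1`. -/
noncomputable def jacobiH (N : ℕ) (b : ℕ → ℝ) : Matrix (Fin N) (Fin N) ℝ :=
  Matrix.of fun i j =>
    if (i : ℕ) = (j : ℕ) then -b ((i : ℕ) + 1)
    else if (i : ℕ) + 1 = (j : ℕ) ∨ (j : ℕ) + 1 = (i : ℕ) then 1 else 0

open Finset Matrix

section Parseval

variable {K ι : Type*} [Field K] [Fintype ι] [DecidableEq ι]

theorem transpose_mul_diagonal_inv_mul_eq_one_of_orthogonal (phi : ι → ι → K)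
    (hself : ∀ k, phi k ⬝ᵥ phi k ≠ 0) (horth : Pairwise fun k l => phi k ⬝ᵥ phi l = 0) :
    (of phi)ᵀ * diagonal (fun k => (phi k ⬝ᵥ phi k)⁻¹) * of phi = 1 := by
  have hgram : of phi * (of phi)ᵀ = diagonal fun k => phi k ⬝ᵥ phi k := by
    ext k l
    by_cases hkl : k = l
    · subst hkl; simp [Matrix.mul_apply, dotProduct]
    · simpa [Matrix.mul_apply, dotProduct, hkl] using horth hkl
  rw [Matrix.mul_assoc]
  refine mul_eq_one_comm.mp ?_
  rw [Matrix.mul_assoc, hgram, diagonal_mul_diagonal]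
  simp [hself]

theorem dotProduct_eq_sum_of_orthogonal (phi : ι → ι → K)
    (hself : ∀ k, phi k ⬝ᵥ phi k ≠ 0) (horth : Pairwise fun k l => phi k ⬝ᵥ phi l = 0)
    (u w : ι → K) :
    u ⬝ᵥ w = ∑ k, (phi k ⬝ᵥ phi k)⁻¹ * (phi k ⬝ᵥ u) * (phi k ⬝ᵥ w) := by
  conv_lhs =>
    rw [← one_mulVec w, ← transpose_mul_diagonal_inv_mul_eq_one_of_orthogonal phi hself horth]
  rw [← mulVec_mulVec, ← mulVec_mulVec, dotProduct_mulVec, vecMul_transpose, dotProduct]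
  refine sum_congr rfl fun k _ => ?_
  rw [mulVec_diagonal]
  simp only [Matrix.mulVec, of_apply]
  ring

end Parseval

section Duhamel

theorem sum_cheb_mul_add_two (lam : ℝ) (f : ℕ → ℝ) (t : ℕ) :
    ∑ l ∈ range (t + 2), cheb lam (t + 2 - l) * f l =
      lam * ∑ l ∈ range (t + 1), cheb lam (t + 1 - l) * f l
        - ∑ l ∈ range t, cheb lam (t - l) * f l + f (t + 1) := by
  have hstep : ∀ l ∈ range (t + 1), cheb lam (t + 2 - l) * f l =
      lam * (cheb lam (t + 1 - l) * f l) - cheb lam (t - l) * f l := by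
    intro l hl
    rw [show t + 2 - l = t - l + 2 by grind, show t + 1 - l = t - l + 1 by grind, cheb]
    ring
  rw [sum_range_succ _ (t + 1), sum_congr rfl hstep, sum_sub_distrib, ← mul_sum]
  simp [sum_range_succ _ t, cheb]

/-- Duhamel's principle: `cheb lam` is the fundamental solution of the recurrence. -/
theorem eq_sum_cheb_mul_of_recurrence (lam : ℝ) (W f : ℕ → ℝ) (h0 : W 0 = 0) (h1 : W 1 = f 0)
    (hrec : ∀ t, W (t + 2) = lam * W (t + 1) - W t + f (t + 1)) (t : ℕ) :
    W t = ∑ l ∈ range t, cheb lam (t - l) * f l := by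
  induction t using Nat.twoStepInduction with
  | zero => simp [h0]
  | one => simp [h1, cheb]
  | more t ih ih' => rw [hrec, ih, ih', sum_cheb_mul_add_two]

end Duhamel

def schrodingerOp (b v : ℕ → ℝ) (n : ℕ) : ℝ := v (n + 1) + v (n - 1) - b n * v n

theorem schrodingerOp_add_one (b v : ℕ → ℝ) (n : ℕ) :
    schrodingerOp b v (n + 1) = v (n + 2) + v n - b (n + 1) * v (n + 1) := rfl

/-- Discrete Green's formula. -/
theorem sum_range_mul_add_sub_add_mul (ψ v : ℕ → ℝ) (N : ℕ) :
    ∑ i ∈ range N, (ψ (i + 1) * (v (i + 2) + v i) - (ψ (i + 2) + ψ i) * v (i + 1)) =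
      ψ N * v (N + 1) - ψ (N + 1) * v N + ψ 1 * v 0 - ψ 0 * v 1 := by
  induction N with
  | zero => simp
  | succ N ih => rw [sum_range_succ, ih]; ring

theorem sum_range_mul_schrodingerOp (b ψ v : ℕ → ℝ) (lam : ℝ) (N : ℕ)
    (hψ0 : ψ 0 = 0) (hψN : ψ (N + 1) = 0)
    (heig : ∀ i < N, schrodingerOp b ψ (i + 1) = lam * ψ (i + 1)) (hvN : v (N + 1) = 0) :
    ∑ i ∈ range N, ψ (i + 1) * schrodingerOp b v (i + 1) =
      lam * ∑ i ∈ range N, ψ (i + 1) * v (i + 1) + ψ 1 * v 0 := by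
  have hgreen := sum_range_mul_add_sub_add_mul ψ v N
  rw [hψ0, hψN, hvN] at hgreen
  have hsplit : ∀ i ∈ range N, ψ (i + 1) * schrodingerOp b v (i + 1) =
      (ψ (i + 1) * (v (i + 2) + v i) - (ψ (i + 2) + ψ i) * v (i + 1))
        + lam * (ψ (i + 1) * v (i + 1)) := by
    intro i hi
    have hi := heig i (mem_range.mp hi)
    rw [schrodingerOp_add_one] at hi ⊢
    linear_combination v (i + 1) * hi
  rw [sum_congr rfl hsplit, sum_add_distrib, hgreen, ← mul_sum]
  ring

/-- The vector `φ` placed on the sites `1, …, N` (`φ j` sits at site `j + 1`), extended by zero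
to the Dirichlet sites `0` and `N + 1`. -/
def dirichletExt {N : ℕ} (φ : Fin N → ℝ) : ℕ → ℝ
  | 0 => 0
  | i + 1 => if h : i < N then φ ⟨i, h⟩ else 0

section dirichletExt

variable {N : ℕ} (φ : Fin N → ℝ)

@[simp] theorem dirichletExt_zero : dirichletExt φ 0 = 0 := rfl

theorem dirichletExt_add_one_self : dirichletExt φ (N + 1) = 0 := by
  simp [dirichletExt]

theorem dirichletExt_add_one {i : ℕ} (hi : i < N) : dirichletExt φ (i + 1) = φ ⟨i, hi⟩ := by
  simp [dirichletExt, hi]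

@[simp] theorem dirichletExt_val_add_one (j : Fin N) : dirichletExt φ (j + 1) = φ j :=
  dirichletExt_add_one φ j.isLt

theorem dotProduct_eq_sum_dirichletExt_mul (v : ℕ → ℝ) :
    φ ⬝ᵥ (fun j : Fin N => v (j + 1)) = ∑ i ∈ range N, dirichletExt φ (i + 1) * v (i + 1) := by
  rw [dotProduct, ← Fin.sum_univ_eq_sum_range (fun i => dirichletExt φ (i + 1) * v (i + 1))]
  simp

theorem sum_ite_add_one_eq_dirichletExt (m : ℕ) :
    ∑ j : Fin N, (if (j : ℕ) + 1 = m then φ j else 0) = dirichletExt φ m := by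
  rcases m with _ | i
  · simp
  · by_cases hi : i < N
    · rw [dirichletExt_add_one φ hi, Fintype.sum_eq_single ⟨i, hi⟩ fun j hj => ?_]
      · simp
      · exact if_neg fun h => hj (Fin.ext (by simp only; omega))
    · rw [show dirichletExt φ (i + 1) = 0 from dif_neg hi]
      exact sum_eq_zero fun j _ => if_neg (by omega)

theorem jacobiH_mulVec_apply (b : ℕ → ℝ) (i : Fin N) :
    (jacobiH N b *ᵥ φ) i = schrodingerOp b (dirichletExt φ) (i + 1) := by
  have hentry : ∀ j : Fin N, jacobiH N b i j * φ j =
      (if (j : ℕ) + 1 = i + 2 then φ j else 0) + (if (j : ℕ) + 1 = i then φ j else 0)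
        - b (i + 1) * (if (j : ℕ) + 1 = i + 1 then φ j else 0) := by
    intro j
    simp only [jacobiH, of_apply]
    split_ifs <;> first | omega | ring
  simp only [schrodingerOp_add_one, mulVec, dotProduct, hentry, sum_add_distrib, sum_sub_distrib,
    ← mul_sum, sum_ite_add_one_eq_dirichletExt]

end dirichletExt

theorem schrodingerOp_dirichletExt_of_mulVec_eq_smul {N : ℕ} {b : ℕ → ℝ} {lam : ℝ} {φ : Fin N → ℝ}
    (heig : jacobiH N b *ᵥ φ = lam • φ) (i : ℕ) (hi : i < N) :
    schrodingerOp b (dirichletExt φ) (i + 1) = lam * dirichletExt φ (i + 1) := by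
  have hrow := congrFun heig ⟨i, hi⟩
  rw [jacobiH_mulVec_apply] at hrow
  simpa [dirichletExt_add_one φ hi] using hrow

theorem sum_Icc_one_mul_eq_dotProduct (N : ℕ) (u w : ℕ → ℝ) :
    ∑ n ∈ Icc 1 N, u n * w n = (fun j : Fin N => u (j + 1)) ⬝ᵥ (fun j : Fin N => w (j + 1)) := by
  rw [dotProduct, Fin.sum_univ_eq_sum_range (fun i => u (i + 1) * w (i + 1)),
    ← Ico_add_one_right_eq_Icc, sum_Ico_eq_sum_range]
  simp [add_comm]

section solFin

variable (N : ℕ) (b f : ℕ → ℝ)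

theorem solFin_zero_site (t : ℕ) : solFin N b f t 0 = f t := by
  rcases t with _ | _ | t <;> simp [solFin]

theorem solFin_last_site (t : ℕ) : solFin N b f t (N + 1) = 0 := by
  rcases t with _ | _ | t <;> simp [solFin]

theorem solFin_zero_of_ne_zero {n : ℕ} (hn : n ≠ 0) : solFin N b f 0 n = 0 := by
  simp [solFin, hn]

theorem solFin_one_add_one {i : ℕ} (hi : i < N) :
    solFin N b f 1 (i + 1) = schrodingerOp b (solFin N b f 0) (i + 1) := by
  simp [solFin, schrodingerOp, hi.ne]

theorem solFin_add_two_add_one (t : ℕ) {i : ℕ} (hi : i < N) :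
    solFin N b f (t + 2) (i + 1) =
      schrodingerOp b (solFin N b f (t + 1)) (i + 1) - solFin N b f t (i + 1) := by
  simp [solFin, schrodingerOp, hi.ne]

end solFin

theorem sum_dirichletExt_mul_solFin {N : ℕ} {b : ℕ → ℝ} {lam : ℝ} {φ : Fin N → ℝ}
    (heig : jacobiH N b *ᵥ φ = lam • φ) (f : ℕ → ℝ) (t : ℕ) :
    ∑ i ∈ range N, dirichletExt φ (i + 1) * solFin N b f t (i + 1) =
      dirichletExt φ 1 * ∑ l ∈ range t, cheb lam (t - l) * f l := by
  let W s := ∑ i ∈ range N, dirichletExt φ (i + 1) * solFin N b f s (i + 1)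
  have hpair (s : ℕ) : ∑ i ∈ range N, dirichletExt φ (i + 1) *
      schrodingerOp b (solFin N b f s) (i + 1) = lam * W s + dirichletExt φ 1 * f s := by
    rw [sum_range_mul_schrodingerOp b _ _ lam N (dirichletExt_zero φ)
      (dirichletExt_add_one_self φ) (schrodingerOp_dirichletExt_of_mulVec_eq_smul heig)
      (solFin_last_site N b f s), solFin_zero_site]
  have h0 : W 0 = 0 :=
    sum_eq_zero fun i _ => by rw [solFin_zero_of_ne_zero N b f i.succ_ne_zero, mul_zero]
  have h1 : W 1 = dirichletExt φ 1 * f 0 := by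
    rw [← zero_add (_ * _), ← mul_zero lam, ← h0, ← hpair]
    exact sum_congr rfl fun i hi => by rw [solFin_one_add_one N b f (mem_range.mp hi)]
  have hrec (s : ℕ) : W (s + 2) = lam * W (s + 1) - W s + dirichletExt φ 1 * f (s + 1) := by
    rw [sub_add_eq_add_sub, ← hpair, ← sum_sub_distrib]
    refine sum_congr rfl fun i hi => ?_
    rw [solFin_add_two_add_one N b f s (mem_range.mp hi)]
    ring
  calc W t = ∑ l ∈ range t, cheb lam (t - l) * (dirichletExt φ 1 * f l) :=
        eq_sum_cheb_mul_of_recurrence lam W _ h0 h1 hrec t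
    _ = dirichletExt φ 1 * ∑ l ∈ range t, cheb lam (t - l) * f l := by
        rw [mul_sum]
        exact sum_congr rfl fun l _ => by ring

/-- Spectral representation of the connecting form of the finite system. -/
theorem spectral_connecting_form (N : ℕ) (hN : 1 ≤ N) (b : ℕ → ℝ)
    (lam : Fin N → ℝ) (phi : Fin N → (Fin N → ℝ))
    (heig : ∀ k, (jacobiH N b).mulVec (phi k) = lam k • phi k)
    (hfirst : ∀ k, phi k ⟨0, hN⟩ = 1)
    (horth : ∀ k l, k ≠ l → dotProduct (phi k) (phi l) = 0)
    (rho : Fin N → ℝ) (hrho : ∀ k, rho k = dotProduct (phi k) (phi k)) :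
    ∀ T : ℕ, 1 ≤ T → ∀ f g : ℕ → ℝ,
      (∀ t, T ≤ t → f t = 0) → (∀ t, T ≤ t → g t = 0) →
      ∑ n ∈ Finset.Icc 1 N, solFin N b f T n * solFin N b g T n =
        ∑ k, (1 / rho k) *
          (∑ l ∈ Finset.range T, cheb (lam k) (T - l) * f l) *
          (∑ m ∈ Finset.range T, cheb (lam k) (T - m) * g m) := by
  intro T _ f g _ _
  have hself (k : Fin N) : phi k ⬝ᵥ phi k ≠ 0 := fun hzero => by
    simpa [dotProduct_self_eq_zero.mp hzero] using hfirst k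
  have hcoeff (k : Fin N) (h : ℕ → ℝ) : phi k ⬝ᵥ (fun j : Fin N => solFin N b h T (j + 1)) =
      ∑ l ∈ range T, cheb (lam k) (T - l) * h l := by
    rw [dotProduct_eq_sum_dirichletExt_mul, sum_dirichletExt_mul_solFin (heig k),
      dirichletExt_add_one _ hN, hfirst, one_mul]
  rw [sum_Icc_one_mul_eq_dotProduct, dotProduct_eq_sum_of_orthogonal phi hself horth]
  simp only [hcoeff, hrho, one_div]
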